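/- arXiv:1605.04026 — 2 statements merged into one kernel-verified Lean document; each statement's English description precedes it below -/
import Mathlib

section
/- For every ε > 0 there exists n_0 such that for every n ≥ n_0 there exists m_0 such that for every m ≥ m_0 the following holds: there is a picking sequence π = (π_1,…,π_m) of the n players such that for any additive valuations v_1,…,v_n over M = {1,…,m}, if the items are allocated by letting player π_t (for t = 1,…,m) take a remaining item of maximum value to her, then every player i receives a bundle of value at least n^{−(0.5+ε)}·μ_i(n, M). In particular, for such n and m there exists a truthful n^{−(0.5+ε)}-approximation mechanism for the public rankings model. -/
open Finset

/-- The total value of a bundle `S` of items under the additive valuation given by `v`. -/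
noncomputable def bundleVal {m : ℕ} (v : Fin m → ℝ) (S : Finset (Fin m)) : ℝ :=
  ∑ j ∈ S, v j

/-- The bundle of items received by player `i` under the allocation `alloc`,
where `alloc j` is the player that receives item `j`.  (Such functions are exactly the
partitions of the items into `n` possibly empty bundles.) -/
def bundleOf {n m : ℕ} (alloc : Fin m → Fin n) (i : Fin n) : Finset (Fin m) :=
  Finset.univ.filter fun j => alloc j = i

/-- The `n`-maximin share of a player with additive valuation `v` over the item set `Fin m`:
the maximum over all partitions of the items into `n` bundles of the minimum bundle value. -/
noncomputable def mms {m : ℕ} (n : ℕ) (v : Fin m → ℝ) : ℝ :=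
  ⨆ f : Fin m → Fin n, ⨅ i : Fin n, bundleVal v (bundleOf f i)

/-- Truthfulness of a mechanism in the cardinal model. -/
def CardTruthful {n m : ℕ} (A : (Fin n → Fin m → ℝ) → (Fin m → Fin n)) : Prop :=
  ∀ V : Fin n → Fin m → ℝ, (∀ i j, 0 ≤ V i j) →
    ∀ (i : Fin n) (v' : Fin m → ℝ), (∀ j, 0 ≤ v' j) →
      bundleVal (V i) (bundleOf (A (Function.update V i v')) i) ≤
        bundleVal (V i) (bundleOf (A V) i)

/-- `ρ`-approximation of a mechanism in the cardinal model. -/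
def CardApprox {n m : ℕ} (ρ : ℝ) (A : (Fin n → Fin m → ℝ) → (Fin m → Fin n)) : Prop :=
  ∀ V : Fin n → Fin m → ℝ, (∀ i j, 0 ≤ V i j) →
    ∀ i : Fin n, ρ * mms n (V i) ≤ bundleVal (V i) (bundleOf (A V) i)

/-- A ranking (strict total order on the items) is encoded as a permutation
`σ : Fin m ≃ Fin m` sending positions to items, `σ 0` being the top item.
A valuation `v` is consistent with the ranking `σ` if the values are
non-increasing along the positions of the ranking. -/
def Consistent {m : ℕ} (v : Fin m → ℝ) (σ : Equiv.Perm (Fin m)) : Prop :=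
  ∀ k l : Fin m, k ≤ l → v (σ l) ≤ v (σ k)

/-- Truthfulness of a mechanism in the ordinal model. -/
def OrdTruthful {n m : ℕ} (A : (Fin n → Equiv.Perm (Fin m)) → (Fin m → Fin n)) : Prop :=
  ∀ (R : Fin n → Equiv.Perm (Fin m)) (i : Fin n) (v : Fin m → ℝ),
    (∀ j, 0 ≤ v j) → Consistent v (R i) →
      ∀ σ' : Equiv.Perm (Fin m),
        bundleVal v (bundleOf (A (Function.update R i σ')) i) ≤
          bundleVal v (bundleOf (A R) i)

/-- `ρ`-approximation of a mechanism in the ordinal model. -/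
def OrdApprox {n m : ℕ} (ρ : ℝ) (A : (Fin n → Equiv.Perm (Fin m)) → (Fin m → Fin n)) : Prop :=
  ∀ V : Fin n → Fin m → ℝ, (∀ i j, 0 ≤ V i j) →
    ∀ R : Fin n → Equiv.Perm (Fin m), (∀ i, Consistent (V i) (R i)) →
      ∀ i : Fin n, ρ * mms n (V i) ≤ bundleVal (V i) (bundleOf (A R) i)

/-- Truthfulness of a mechanism in the public rankings model with publicly known rankings `R`. -/
def PRTruthful {n m : ℕ} (R : Fin n → Equiv.Perm (Fin m))
    (A : (Fin n → Fin m → ℝ) → (Fin m → Fin n)) : Prop :=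
  ∀ V : Fin n → Fin m → ℝ, (∀ i j, 0 ≤ V i j) → (∀ i, Consistent (V i) (R i)) →
    ∀ (i : Fin n) (v' : Fin m → ℝ), (∀ j, 0 ≤ v' j) → Consistent v' (R i) →
      bundleVal (V i) (bundleOf (A (Function.update V i v')) i) ≤
        bundleVal (V i) (bundleOf (A V) i)

/-- `ρ`-approximation in the public rankings model with publicly known rankings `R`. -/
def PRApprox {n m : ℕ} (ρ : ℝ) (R : Fin n → Equiv.Perm (Fin m))
    (A : (Fin n → Fin m → ℝ) → (Fin m → Fin n)) : Prop :=
  ∀ V : Fin n → Fin m → ℝ, (∀ i j, 0 ≤ V i j) → (∀ i, Consistent (V i) (R i)) →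
    ∀ i : Fin n, ρ * mms n (V i) ≤ bundleVal (V i) (bundleOf (A V) i)

/-- The highest-ranked item of the nonempty set `S` according to the ranking `σ`. -/
def bestItem {m : ℕ} (σ : Equiv.Perm (Fin m)) (S : Finset (Fin m)) (h : S.Nonempty) : Fin m :=
  σ ((S.image σ.symm).min' (h.image σ.symm))

/-- The (possibly partial) allocation produced by running the picking sequence `seq` on the
remaining items `S`: at each turn the current player of the sequence takes the highest-ranked
remaining item according to her ranking. -/
def pickAllocList {n m : ℕ} (R : Fin n → Equiv.Perm (Fin m)) :
    List (Fin n) → Finset (Fin m) → Fin m → Option (Fin n)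
  | [], _ => fun _ => none
  | p :: rest, S =>
    if h : S.Nonempty then
      Function.update (pickAllocList R rest (S.erase (bestItem (R p) S h)))
        (bestItem (R p) S h) (some p)
    else fun _ => none

/-- The mechanism for the ordinal model induced by the picking sequence `seq`. -/
def pickMech {n m : ℕ} (seq : List (Fin n)) (R : Fin n → Equiv.Perm (Fin m)) :
    Fin m → Option (Fin n) :=
  pickAllocList R seq Finset.univ

/-- The bundle of player `i` in a possibly partial allocation. -/
def obundleOf {n m : ℕ} (alloc : Fin m → Option (Fin n)) (i : Fin n) : Finset (Fin m) :=
  Finset.univ.filter fun j => alloc j = some i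

/-- Truthfulness in the ordinal model, for mechanisms producing possibly partial allocations. -/
def OrdTruthfulO {n m : ℕ} (A : (Fin n → Equiv.Perm (Fin m)) → (Fin m → Option (Fin n))) : Prop :=
  ∀ (R : Fin n → Equiv.Perm (Fin m)) (i : Fin n) (v : Fin m → ℝ),
    (∀ j, 0 ≤ v j) → Consistent v (R i) →
      ∀ σ' : Equiv.Perm (Fin m),
        bundleVal v (obundleOf (A (Function.update R i σ')) i) ≤
          bundleVal v (obundleOf (A R) i)

/-- `ρ`-approximation in the ordinal model, for mechanisms producing possibly partial
allocations. -/
def OrdApproxO {n m : ℕ} (ρ : ℝ)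
    (A : (Fin n → Equiv.Perm (Fin m)) → (Fin m → Option (Fin n))) : Prop :=
  ∀ V : Fin n → Fin m → ℝ, (∀ i j, 0 ≤ V i j) →
    ∀ R : Fin n → Equiv.Perm (Fin m), (∀ i, Consistent (V i) (R i)) →
      ∀ i : Fin n, ρ * mms n (V i) ≤ bundleVal (V i) (obundleOf (A R) i)

/-- Truthfulness in the public rankings model, for mechanisms producing possibly partial
allocations. -/
def PRTruthfulO {n m : ℕ} (R : Fin n → Equiv.Perm (Fin m))
    (A : (Fin n → Fin m → ℝ) → (Fin m → Option (Fin n))) : Prop :=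
  ∀ V : Fin n → Fin m → ℝ, (∀ i j, 0 ≤ V i j) → (∀ i, Consistent (V i) (R i)) →
    ∀ (i : Fin n) (v' : Fin m → ℝ), (∀ j, 0 ≤ v' j) → Consistent v' (R i) →
      bundleVal (V i) (obundleOf (A (Function.update V i v')) i) ≤
        bundleVal (V i) (obundleOf (A V) i)

/-- `ρ`-approximation in the public rankings model, for mechanisms producing possibly partial
allocations. -/
def PRApproxO {n m : ℕ} (ρ : ℝ) (R : Fin n → Equiv.Perm (Fin m))
    (A : (Fin n → Fin m → ℝ) → (Fin m → Option (Fin n))) : Prop :=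
  ∀ V : Fin n → Fin m → ℝ, (∀ i j, 0 ≤ V i j) → (∀ i, Consistent (V i) (R i)) →
    ∀ i : Fin n, ρ * mms n (V i) ≤ bundleVal (V i) (obundleOf (A V) i)


/-! ### Auxiliary material for the proof of `stmt17` -/

/-- The value of the item at rank position `k` (`0`-indexed), and `0` for `k ≥ m`. -/
noncomputable def aval {m : ℕ} (v : Fin m → ℝ) (σ : Equiv.Perm (Fin m)) (k : ℕ) : ℝ :=
  if h : k < m then v (σ ⟨k, h⟩) else 0

lemma aval_nonneg {m : ℕ} (v : Fin m → ℝ) (σ : Equiv.Perm (Fin m)) (hv : ∀ j, 0 ≤ v j) (k : ℕ) :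
    0 ≤ aval v σ k := by
  unfold aval; split
  · exact hv _
  · exact le_rfl

lemma aval_anti {m : ℕ} {v : Fin m → ℝ} {σ : Equiv.Perm (Fin m)} (hv : ∀ j, 0 ≤ v j)
    (hc : Consistent v σ) {k l : ℕ} (hkl : k ≤ l) : aval v σ l ≤ aval v σ k := by
  unfold aval
  by_cases hl : l < m
  · have hk : k < m := lt_of_le_of_lt hkl hl
    rw [dif_pos hl, dif_pos hk]
    exact hc ⟨k, hk⟩ ⟨l, hl⟩ hkl
  · rw [dif_neg hl]
    split
    · exact hv _
    · exact le_rfl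

lemma bestItem_mem {m : ℕ} (σ : Equiv.Perm (Fin m)) (S : Finset (Fin m)) (h : S.Nonempty) :
    bestItem σ S h ∈ S := by
  have h1 := (S.image σ.symm).min'_mem (h.image σ.symm)
  rw [Finset.mem_image] at h1
  obtain ⟨x, hx, he⟩ := h1
  have hbx : bestItem σ S h = x := by rw [bestItem, ← he]; simp
  rw [hbx]; exact hx

lemma bestItem_val {m : ℕ} {v : Fin m → ℝ} {σ : Equiv.Perm (Fin m)} (hc : Consistent v σ)
    (S : Finset (Fin m)) (h : S.Nonempty) :
    aval v σ (m - S.card) ≤ v (bestItem σ S h) := by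
  have hcard : S.card ≤ m := by
    simpa using Finset.card_le_card (Finset.subset_univ S)
  have hpos : 0 < S.card := Finset.card_pos.2 h
  have hlt : m - S.card < m := by omega
  set p := (S.image σ.symm).min' (h.image σ.symm) with hp
  have hple : (p : ℕ) ≤ m - S.card := by
    have hsub : S.image σ.symm ⊆ Finset.Ici p :=
      fun x hx => Finset.mem_Ici.2 (Finset.min'_le _ _ hx)
    have hcards := Finset.card_le_card hsub
    rw [Finset.card_image_of_injective _ σ.symm.injective, Fin.card_Ici] at hcards
    omega
  rw [aval, dif_pos hlt]
  exact hc p ⟨m - S.card, hlt⟩ hple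

lemma pickAlloc_not_mem {n m : ℕ} (R : Fin n → Equiv.Perm (Fin m)) :
    ∀ (seq : List (Fin n)) (S : Finset (Fin m)) (j : Fin m), j ∉ S →
      pickAllocList R seq S j = none := by
  intro seq
  induction seq with
  | nil => intro S j hj; rfl
  | cons p rest ih =>
    intro S j hj
    rw [pickAllocList]
    split
    · next h =>
      rw [Function.update_apply, if_neg, ih]
      · intro hm; exact hj (Finset.mem_of_mem_erase hm)
      · rintro rfl; exact hj (bestItem_mem _ _ _)
    · rfl

lemma obundle_subset {n m : ℕ} (R : Fin n → Equiv.Perm (Fin m)) (seq : List (Fin n))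
    (S : Finset (Fin m)) (i : Fin n) : obundleOf (pickAllocList R seq S) i ⊆ S := by
  intro j hj
  by_contra hjS
  have h := pickAlloc_not_mem R seq S j hjS
  simp [obundleOf, h] at hj

lemma obundleOf_update_some {n m : ℕ} (f : Fin m → Option (Fin n)) (b : Fin m) (p i : Fin n)
    (hb : f b = none) :
    obundleOf (Function.update f b (some p)) i =
      if p = i then insert b (obundleOf f i) else obundleOf f i := by
  ext j
  by_cases hj : j = b <;> by_cases hpi : p = i <;>
    simp [obundleOf, Function.update_apply, hj, hpi, hb]

/-- Lower bound for the value collected by player `i` along a picking sequence: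
the sum of `a c` over the positions `c` (shifted by the starting offset) at which `i` picks. -/
noncomputable def lbv {n : ℕ} (i : Fin n) (a : ℕ → ℝ) : List (Fin n) → ℕ → ℝ
  | [], _ => 0
  | p :: rest, c => (if p = i then a c else 0) + lbv i a rest (c + 1)

lemma lbv_eq {n : ℕ} (i : Fin n) (a : ℕ → ℝ) :
    ∀ (seq : List (Fin n)) (c : ℕ),
      lbv i a seq c = ∑ t ∈ Finset.range seq.length,
        (if seq.getD t i = i then a (c + t) else 0) := by
  intro seq
  induction seq with
  | nil => intro c; simp [lbv]
  | cons p rest ih =>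
    intro c
    rw [lbv, ih (c + 1), List.length_cons, Finset.sum_range_succ']
    simp only [List.getD_cons_succ, List.getD_cons_zero, Nat.add_zero]
    rw [add_comm]
    congr 1
    apply Finset.sum_congr rfl
    intro t _
    congr 2
    omega

lemma pick_value {n m : ℕ} (R : Fin n → Equiv.Perm (Fin m)) (V : Fin n → Fin m → ℝ)
    (i : Fin n) (hc : Consistent (V i) (R i)) :
    ∀ (seq : List (Fin n)) (S : Finset (Fin m)), seq.length ≤ S.card →
      lbv i (aval (V i) (R i)) seq (m - S.card) ≤
        bundleVal (V i) (obundleOf (pickAllocList R seq S) i) := by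
  intro seq
  induction seq with
  | nil =>
    intro S _
    simp [lbv, pickAllocList, obundleOf, bundleVal]
  | cons p rest ih =>
    intro S hlen
    rw [List.length_cons] at hlen
    have hS : S.Nonempty := Finset.card_pos.1 (lt_of_lt_of_le (Nat.succ_pos _) hlen)
    have hbS : bestItem (R p) S hS ∈ S := bestItem_mem _ _ _
    set b := bestItem (R p) S hS with hbdef
    have hcard : S.card ≤ m := by simpa using Finset.card_le_card (Finset.subset_univ S)
    have hcpos : 0 < S.card := Finset.card_pos.2 hS
    have herase : (S.erase b).card = S.card - 1 := Finset.card_erase_of_mem hbS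
    have hlen' : rest.length ≤ (S.erase b).card := by omega
    have hnone : pickAllocList R rest (S.erase b) b = none :=
      pickAlloc_not_mem R rest _ b (Finset.notMem_erase _ _)
    have ihh := ih (S.erase b) hlen'
    rw [herase] at ihh
    have hcc : m - (S.card - 1) = (m - S.card) + 1 := by omega
    rw [hcc] at ihh
    rw [pickAllocList, dif_pos hS, ← hbdef,
      obundleOf_update_some _ _ _ _ hnone, lbv]
    by_cases hpi : p = i
    · rw [if_pos hpi, if_pos hpi, bundleVal, Finset.sum_insert]
      · refine add_le_add ?_ ihh
        subst hpi
        exact bestItem_val hc S hS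
      · intro hmem
        exact absurd (obundle_subset R rest (S.erase b) i hmem) (by simp)
    · rw [if_neg hpi, if_neg hpi, zero_add]
      exact ihh

lemma sum_Ico_le_card_mul {a : ℕ → ℝ} (hanti : ∀ k l, k ≤ l → a l ≤ a k) (c e : ℕ) :
    ∑ k ∈ Finset.Ico c e, a k ≤ ((e - c : ℕ) : ℝ) * a c := by
  calc ∑ k ∈ Finset.Ico c e, a k ≤ ∑ _k ∈ Finset.Ico c e, a c := by
        apply Finset.sum_le_sum
        intro k hk
        exact hanti c k (Finset.mem_Ico.1 hk).1
    _ = ((e - c : ℕ) : ℝ) * a c := by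
        rw [Finset.sum_const, Nat.card_Ico, nsmul_eq_mul]

/-- Window bound: the tail sum is at most `G` times the sum over an arithmetic
progression of step `G`. -/
lemma window {a : ℕ → ℝ} (ha : ∀ k, 0 ≤ a k) (hanti : ∀ k l, k ≤ l → a l ≤ a k)
    {G : ℕ} (hG : 1 ≤ G) :
    ∀ (T c₀ M : ℕ), M ≤ c₀ + T * G →
      ∑ k ∈ Finset.Ico c₀ M, a k ≤ (G : ℝ) * ∑ t ∈ Finset.range T, a (c₀ + t * G) := by
  intro T
  induction T with
  | zero =>
    intro c₀ M hM
    simp only [Nat.zero_mul, Nat.add_zero] at hM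
    rw [Finset.Ico_eq_empty (by omega)]
    simp
  | succ T ih =>
    intro c₀ M hM
    have hrec0 : 0 ≤ ∑ t ∈ Finset.range T, a ((c₀ + G) + t * G) :=
      Finset.sum_nonneg fun _ _ => ha _
    have hrw : (G : ℝ) * ∑ t ∈ Finset.range (T + 1), a (c₀ + t * G)
        = (G : ℝ) * a c₀ + (G : ℝ) * ∑ t ∈ Finset.range T, a ((c₀ + G) + t * G) := by
      rw [Finset.sum_range_succ']
      have hsh : ∀ t, c₀ + (t + 1) * G = (c₀ + G) + t * G := by intro t; ring
      simp only [hsh, Nat.zero_mul, Nat.add_zero]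
      ring
    rw [hrw]
    have hfront : ∀ e, e ≤ c₀ + G → ∑ k ∈ Finset.Ico c₀ e, a k ≤ (G : ℝ) * a c₀ := by
      intro e he
      refine le_trans (sum_Ico_le_card_mul hanti c₀ e) ?_
      apply mul_le_mul_of_nonneg_right _ (ha c₀)
      exact_mod_cast Nat.cast_le.2 (by omega : e - c₀ ≤ G)
    by_cases hM2 : M ≤ c₀ + G
    · have h1 := hfront M hM2
      nlinarith [mul_nonneg (by positivity : (0:ℝ) ≤ (G:ℝ)) hrec0]
    · push_neg at hM2
      rw [← Finset.sum_Ico_consecutive a (by omega : c₀ ≤ c₀ + G) (le_of_lt hM2)]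
      refine add_le_add (hfront _ le_rfl) (ih (c₀ + G) M ?_)
      have h : (T + 1) * G = T * G + G := by ring
      omega

lemma tail_eq {m : ℕ} (v : Fin m → ℝ) (σ : Equiv.Perm (Fin m)) (s : ℕ) :
    ∑ k ∈ Finset.Ico s m, aval v σ k
      = ∑ j ∈ Finset.univ.filter (fun j : Fin m => s ≤ ((σ.symm j : Fin m) : ℕ)), v j := by
  have hIco : Finset.Ico s m = (Finset.range m).filter (fun k => s ≤ k) := by
    ext k
    simp only [Finset.mem_Ico, Finset.mem_filter, Finset.mem_range]
    omega
  rw [hIco, Finset.sum_filter,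
    ← Fin.sum_univ_eq_sum_range (fun k => if s ≤ k then aval v σ k else 0) m,
    ← Finset.sum_filter]
  refine Finset.sum_equiv (σ : Equiv.Perm (Fin m)) ?_ ?_
  · intro k
    simp
  · intro k hk
    simp [aval, dif_pos k.isLt]

/-- Key maximin-share upper bound: `(n - s) · μ` is at most the total value of the items
ranked at positions `≥ s`. -/
lemma mms_le_tail {n m : ℕ} (v : Fin m → ℝ) (hv : ∀ j, 0 ≤ v j) (σ : Equiv.Perm (Fin m))
    {s : ℕ} (hs : s < n) :
    ((n - s : ℕ) : ℝ) * mms n v ≤ ∑ k ∈ Finset.Ico s m, aval v σ k := by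
  haveI : Nonempty (Fin n) := ⟨⟨0, Nat.lt_of_le_of_lt (Nat.zero_le s) hs⟩⟩
  rw [tail_eq]
  set B := ∑ j ∈ Finset.univ.filter (fun j : Fin m => s ≤ ((σ.symm j : Fin m) : ℕ)), v j with hB
  have hB0 : 0 ≤ B := Finset.sum_nonneg fun j _ => hv j
  have hds : (0 : ℝ) < ((n - s : ℕ) : ℝ) := by
    have h1 : 1 ≤ n - s := by omega
    exact_mod_cast Nat.lt_of_lt_of_le Nat.zero_lt_one (by exact_mod_cast h1)
  have key : ∀ f : Fin m → Fin n,
      (⨅ i : Fin n, bundleVal v (bundleOf f i)) ≤ B / ((n - s : ℕ) : ℝ) := by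
    intro f
    set c := ⨅ i : Fin n, bundleVal v (bundleOf f i) with hcdef
    have hc0 : 0 ≤ c := le_ciInf fun i => Finset.sum_nonneg fun j _ => hv j
    set occ := (Finset.univ.filter (fun k : Fin m => (k : ℕ) < s)).image (fun k => f (σ k))
      with hocc
    set A := (Finset.univ : Finset (Fin n)) \ occ with hA
    have hocc_card : occ.card ≤ s := by
      refine le_trans Finset.card_image_le ?_
      have h1 : (Finset.univ.filter (fun k : Fin m => (k : ℕ) < s)).card
          ≤ (Finset.range s).card := by
        apply Finset.card_le_card_of_injOn (fun k : Fin m => (k : ℕ))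
        · intro k hk
          simp only [Finset.mem_coe, Finset.mem_filter] at hk
          simpa using hk.2
        · intro x _ y _ h
          exact Fin.val_injective h
      simpa using h1
    have hAcard : n - s ≤ A.card := by
      have h2 : A.card = n - occ.card := by
        rw [hA, Finset.card_sdiff_of_subset (Finset.subset_univ _), Finset.card_univ, Fintype.card_fin]
      omega
    have step2 : ((n - s : ℕ) : ℝ) * c ≤ (A.card : ℝ) * c := by
      apply mul_le_mul_of_nonneg_right _ hc0
      exact_mod_cast hAcard
    have step3 : (A.card : ℝ) * c ≤ ∑ i' ∈ A, bundleVal v (bundleOf f i') := by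
      rw [← nsmul_eq_mul, ← Finset.sum_const]
      apply Finset.sum_le_sum
      intro i' _
      exact ciInf_le ((Set.finite_range _).bddBelow) i'
    have hbi : Finset.univ.filter (fun j : Fin m => f j ∈ A)
        = A.biUnion (fun i' => Finset.univ.filter (fun j => f j = i')) := by
      ext j
      simp
    have step4 : ∑ i' ∈ A, bundleVal v (bundleOf f i')
        = ∑ j ∈ Finset.univ.filter (fun j : Fin m => f j ∈ A), v j := by
      rw [hbi, Finset.sum_biUnion]
      · rfl
      · intro x _ y _ hxy
        simp only [Finset.disjoint_left, Finset.mem_filter, Finset.mem_univ, true_and]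
        rintro a rfl h2
        exact hxy h2
    have step5 : ∑ j ∈ Finset.univ.filter (fun j : Fin m => f j ∈ A), v j ≤ B := by
      apply Finset.sum_le_sum_of_subset_of_nonneg
      · intro j hj
        simp only [Finset.mem_filter, Finset.mem_univ, true_and] at hj ⊢
        by_contra hcon
        push_neg at hcon
        have hmem : f j ∈ occ := by
          rw [hocc]
          refine Finset.mem_image.2 ⟨σ.symm j, ?_, by simp⟩
          simp only [Finset.mem_filter, Finset.mem_univ, true_and]
          omega
        rw [hA] at hj
        simp only [Finset.mem_sdiff, Finset.mem_univ, true_and] at hj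
        exact hj hmem
      · intro j _ _
        exact hv j
    rw [le_div_iff₀ hds, mul_comm]
    exact le_trans step2 (le_trans step3 (le_trans (le_of_eq step4) step5))
  have h2 : mms n v ≤ B / ((n - s : ℕ) : ℝ) :=
    Real.iSup_le key (div_nonneg hB0 hds.le)
  calc ((n - s : ℕ) : ℝ) * mms n v ≤ ((n - s : ℕ) : ℝ) * (B / ((n - s : ℕ) : ℝ)) :=
        mul_le_mul_of_nonneg_left h2 hds.le
    _ = B := by field_simp

lemma mms_nonneg {n m : ℕ} (hn : 0 < n) (v : Fin m → ℝ) (hv : ∀ j, 0 ≤ v j) :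
    0 ≤ mms n v := by
  haveI : Nonempty (Fin n) := ⟨⟨0, hn⟩⟩
  have hbdd : BddAbove (Set.range fun f : Fin m → Fin n =>
      ⨅ i : Fin n, bundleVal v (bundleOf f i)) := by
    refine ⟨∑ j, v j, ?_⟩
    rintro x ⟨f, rfl⟩
    refine le_trans (ciInf_le ((Set.finite_range _).bddBelow) (Classical.arbitrary _)) ?_
    exact Finset.sum_le_sum_of_subset_of_nonneg (Finset.subset_univ _) fun j _ _ => hv j
  refine le_trans ?_ (le_ciSup hbdd (fun _ => Classical.arbitrary _))
  exact le_ciInf fun i => Finset.sum_nonneg fun j _ => hv j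

/-- The player picking at position `n + x` of the designed sequence. -/
def ownerN (n L x : ℕ) : ℕ := n - (2 ^ (x % L) + (x / L) % 2 ^ (x % L))

def seqFun (n L : ℕ) (hn : 0 < n) (t : ℕ) : Fin n :=
  if h : t < n then ⟨t, h⟩ else
    ⟨ownerN n L (t - n), by
      have h1 : 1 ≤ 2 ^ ((t - n) % L) := Nat.one_le_two_pow
      unfold ownerN
      omega⟩

/-- The designed picking sequence: one pass over all players, followed by a dyadically
staggered schedule. -/
def pseq (n m L : ℕ) (hn : 0 < n) : List (Fin n) := (List.range m).map (seqFun n L hn)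

lemma pseq_length (n m L : ℕ) (hn : 0 < n) : (pseq n m L hn).length = m := by
  simp [pseq]

lemma pseq_getD (n m L : ℕ) (hn : 0 < n) (t : ℕ) (ht : t < m) (d : Fin n) :
    (pseq n m L hn).getD t d = seqFun n L hn t := by
  rw [pseq, List.getD_eq_getElem _ _ (by simpa using ht)]
  simp

lemma owner_spec (n L d : ℕ) (hd1 : 1 ≤ d) (hL : Nat.log 2 d < L) (y : ℕ) :
    ownerN n L (Nat.log 2 d + L * ((d - 2 ^ Nat.log 2 d) + y * 2 ^ Nat.log 2 d)) = n - d := by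
  set j := Nat.log 2 d with hj
  have h2j : 2 ^ j ≤ d := Nat.pow_log_le_self 2 (by omega)
  have h2j' : d < 2 ^ (j + 1) := Nat.lt_pow_succ_log_self (by norm_num) d
  have hs : d - 2 ^ j < 2 ^ j := by
    rw [pow_succ] at h2j'
    omega
  unfold ownerN
  have hmod : (j + L * (d - 2 ^ j + y * 2 ^ j)) % L = j := by
    rw [Nat.add_mul_mod_self_left, Nat.mod_eq_of_lt hL]
  have hdiv : (j + L * (d - 2 ^ j + y * 2 ^ j)) / L = d - 2 ^ j + y * 2 ^ j := by
    rw [Nat.add_mul_div_left _ _ (by omega : 0 < L), Nat.div_eq_of_lt hL, zero_add]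
  rw [hmod, hdiv, Nat.add_mul_mod_self_right, Nat.mod_eq_of_lt hs]
  omega

lemma sq_le_pow (k : ℕ) (hk : 9 ≤ k) : (2 * k + 3) ^ 2 ≤ 2 ^ k := by
  induction k with
  | zero => omega
  | succ k ih =>
    rcases Nat.lt_or_ge k 9 with h | h
    · have hk8 : k = 8 := by omega
      subst hk8
      norm_num
    · have h1 := ih h
      have h2 : 2 ^ (k + 1) = 2 * 2 ^ k := by ring
      nlinarith


set_option maxHeartbeats 1000000 in
/-- For every `ε > 0` there is `n₀` such that for every `n ≥ n₀` there is `m₀`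
such that for every `m ≥ m₀` there is a picking sequence `π` of length `m` with the following
property: allocating the items by letting, at step `t`, player `π_t` take a remaining item of
maximum value to her (equivalently, the top remaining item of any ranking consistent with her
valuation) gives every player at least `n^{-(1/2+ε)}` times her maximin share.  In particular,
for such `n` and `m` there is a truthful `n^{-(1/2+ε)}`-approximation mechanism for the public
rankings model. -/
theorem stmt17 (ε : ℝ) (hε : 0 < ε) :
    ∃ n₀ : ℕ, ∀ n : ℕ, n₀ ≤ n → ∃ m₀ : ℕ, ∀ m : ℕ, m₀ ≤ m →
      ∃ π : List (Fin n), π.length = m ∧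
        (∀ V : Fin n → Fin m → ℝ, (∀ i j, 0 ≤ V i j) →
          ∀ R : Fin n → Equiv.Perm (Fin m), (∀ i, Consistent (V i) (R i)) →
            ∀ i : Fin n, (n : ℝ) ^ (-(1 / 2 + ε)) * mms n (V i) ≤
              bundleVal (V i) (obundleOf (pickAllocList R π Finset.univ) i)) ∧
        (∀ R : Fin n → Equiv.Perm (Fin m),
          ∃ A : (Fin n → Fin m → ℝ) → (Fin m → Option (Fin n)),
            PRTruthfulO R A ∧ PRApproxO ((n : ℝ) ^ (-(1 / 2 + ε))) R A) := by
  refine ⟨100000, fun n hn => ⟨n, fun m hm => ?_⟩⟩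
  have hn0 : 0 < n := by omega
  set L : ℕ := Nat.log 2 n + 1 with hLdef
  have hmain : ∀ V : Fin n → Fin m → ℝ, (∀ i j, 0 ≤ V i j) →
      ∀ R : Fin n → Equiv.Perm (Fin m), (∀ i, Consistent (V i) (R i)) →
      ∀ i : Fin n, (n : ℝ) ^ (-(1 / 2 + ε)) * mms n (V i) ≤
        bundleVal (V i) (obundleOf (pickAllocList R (pseq n m L hn0) Finset.univ) i) := by
    intro V hV R hC i
    classical
    set valv := bundleVal (V i) (obundleOf (pickAllocList R (pseq n m L hn0) Finset.univ) i)
      with hvalv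
    have ha0 : ∀ k, 0 ≤ aval (V i) (R i) k := fun k => aval_nonneg _ _ (hV i) k
    have hanti : ∀ k l, k ≤ l → aval (V i) (R i) l ≤ aval (V i) (R i) k :=
      fun k l h => aval_anti (hV i) (hC i) h
    set r : ℕ := (i : ℕ) with hrdef
    have hrn : r < n := i.isLt
    set d : ℕ := n - r with hddef
    have hd1 : 1 ≤ d := by omega
    have hdn : d ≤ n := by omega
    set j : ℕ := Nat.log 2 d with hjdef
    have hjL : j < L := by
      have h := Nat.log_mono_right (b := 2) hdn
      omega
    have h2j : 2 ^ j ≤ d := by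
      rw [hjdef]; exact Nat.pow_log_le_self 2 (by omega)
    have h2jpos : 1 ≤ 2 ^ j := Nat.one_le_two_pow
    have hLpos : 0 < L := by omega
    set G : ℕ := L * 2 ^ j with hGdef
    have hG1 : 1 ≤ G := by
      rw [hGdef]; exact Nat.one_le_iff_ne_zero.2 (by positivity)
    set q0 : ℕ := n + (j + L * (d - 2 ^ j)) with hq0def
    have hq0n : n ≤ q0 := by rw [hq0def]; exact Nat.le_add_right _ _
    have hxeq : ∀ t : ℕ, q0 + t * G = n + (j + L * ((d - 2 ^ j) + t * 2 ^ j)) := by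
      intro t; rw [hq0def, hGdef]; ring
    have howner : ∀ t : ℕ, q0 + t * G < m →
        (pseq n m L hn0).getD (q0 + t * G) i = i := by
      intro t ht
      rw [pseq_getD n m L hn0 _ ht i]
      unfold seqFun
      rw [dif_neg (by omega : ¬ q0 + t * G < n)]
      apply Fin.ext
      show ownerN n L (q0 + t * G - n) = (i : ℕ)
      have hx : q0 + t * G - n = j + L * ((d - 2 ^ j) + t * 2 ^ j) := by
        rw [hxeq t]; omega
      rw [hx, hjdef, owner_spec n L d hd1 (by rw [← hjdef]; exact hjL) t]
      omega
    have hfirst : (pseq n m L hn0).getD r i = i := by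
      rw [pseq_getD n m L hn0 r (lt_of_lt_of_le hrn hm) i]
      unfold seqFun
      rw [dif_pos hrn]
    have hcardu : (Finset.univ : Finset (Fin m)).card = m := by simp
    have hval0 : lbv i (aval (V i) (R i)) (pseq n m L hn0) 0 ≤ valv := by
      have h := pick_value R V i (hC i) (pseq n m L hn0) Finset.univ
        (by rw [pseq_length, hcardu])
      rw [hcardu, Nat.sub_self] at h
      exact h
    set Stail := ∑ t ∈ Finset.range m, aval (V i) (R i) (q0 + t * G) with hStail
    have hS0 : 0 ≤ Stail := Finset.sum_nonneg fun t _ => ha0 _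
    have hlow : aval (V i) (R i) r + Stail ≤ lbv i (aval (V i) (R i)) (pseq n m L hn0) 0 := by
      rw [lbv_eq, pseq_length]
      simp only [Nat.zero_add]
      set Q : Finset ℕ := ((Finset.range m).filter (fun t => q0 + t * G < m)).image
        (fun t => q0 + t * G) with hQ
      have hQmem : ∀ x ∈ Q, q0 ≤ x ∧ x < m := by
        intro x hx
        rw [hQ] at hx
        simp only [Finset.mem_image, Finset.mem_filter, Finset.mem_range] at hx
        obtain ⟨t, ⟨_, h2⟩, rfl⟩ := hx
        exact ⟨Nat.le_add_right _ _, h2⟩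
      have hrQ : r ∉ Q := fun hr => by
        have h := (hQmem r hr).1
        omega
      have hsub : insert r Q ⊆ Finset.range m := by
        intro x hx
        rcases Finset.mem_insert.1 hx with rfl | hx
        · exact Finset.mem_range.2 (lt_of_lt_of_le hrn hm)
        · exact Finset.mem_range.2 (hQmem x hx).2
      have hstep : ∑ x ∈ insert r Q, (if (pseq n m L hn0).getD x i = i
            then aval (V i) (R i) x else 0)
          ≤ ∑ t ∈ Finset.range m, (if (pseq n m L hn0).getD t i = i
            then aval (V i) (R i) t else 0) := by
        apply Finset.sum_le_sum_of_subset_of_nonneg hsub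
        intro t _ _
        split
        · exact ha0 t
        · exact le_rfl
      refine le_trans ?_ hstep
      rw [Finset.sum_insert hrQ, if_pos hfirst]
      apply add_le_add le_rfl
      have hQval : ∀ x ∈ Q, (if (pseq n m L hn0).getD x i = i
          then aval (V i) (R i) x else 0) = aval (V i) (R i) x := by
        intro x hx
        rw [hQ] at hx
        simp only [Finset.mem_image, Finset.mem_filter, Finset.mem_range] at hx
        obtain ⟨t, ⟨_, h2⟩, rfl⟩ := hx
        rw [if_pos (howner t h2)]
      rw [Finset.sum_congr rfl hQval]
      have hinj : ∀ x ∈ (Finset.range m).filter (fun t => q0 + t * G < m),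
          ∀ y ∈ (Finset.range m).filter (fun t => q0 + t * G < m),
          q0 + x * G = q0 + y * G → x = y := by
        intro x _ y _ hxy
        have hGpos : 0 < G := hG1
        have hxyG : x * G = y * G := by omega
        exact Nat.eq_of_mul_eq_mul_right hGpos hxyG
      have hz : ∑ t ∈ (Finset.range m).filter (fun t => ¬ q0 + t * G < m),
          aval (V i) (R i) (q0 + t * G) = 0 :=
        Finset.sum_eq_zero fun t ht => by
          have h2 := (Finset.mem_filter.1 ht).2
          unfold aval
          rw [dif_neg (by omega)]
      have hQsum : ∑ x ∈ Q, aval (V i) (R i) x = Stail := by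
        rw [hQ, Finset.sum_image hinj, hStail,
          ← Finset.sum_filter_add_sum_filter_not (Finset.range m)
            (fun t => q0 + t * G < m) (fun t => aval (V i) (R i) (q0 + t * G)),
          hz, add_zero]
      exact le_of_eq hQsum.symm
    have hwin : ∑ k ∈ Finset.Ico q0 m, aval (V i) (R i) k ≤ (G : ℝ) * Stail := by
      rw [hStail]
      apply window ha0 hanti hG1 m q0 m
      calc m ≤ m * G := Nat.le_mul_of_pos_right m (by omega)
        _ ≤ q0 + m * G := Nat.le_add_left _ _
    have hfront : ∑ k ∈ Finset.Ico r q0, aval (V i) (R i) k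
        ≤ ((q0 - r : ℕ) : ℝ) * aval (V i) (R i) r :=
      sum_Ico_le_card_mul hanti r q0
    have hsplit : ∑ k ∈ Finset.Ico r m, aval (V i) (R i) k
        ≤ ((q0 - r : ℕ) : ℝ) * aval (V i) (R i) r + (G : ℝ) * Stail := by
      by_cases hq0m : q0 ≤ m
      · rw [← Finset.sum_Ico_consecutive (aval (V i) (R i)) (by omega : r ≤ q0) hq0m]
        exact add_le_add hfront hwin
      · push_neg at hq0m
        have h1 : ∑ k ∈ Finset.Ico r m, aval (V i) (R i) k
            ≤ ∑ k ∈ Finset.Ico r q0, aval (V i) (R i) k :=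
          Finset.sum_le_sum_of_subset_of_nonneg
            (Finset.Ico_subset_Ico le_rfl (le_of_lt hq0m)) (fun k _ _ => ha0 k)
        have h2 : 0 ≤ (G : ℝ) * Stail := mul_nonneg (by positivity) hS0
        linarith
    have hmms : ((n - r : ℕ) : ℝ) * mms n (V i)
        ≤ ∑ k ∈ Finset.Ico r m, aval (V i) (R i) k :=
      mms_le_tail (V i) (hV i) (R i) hrn
    -- real cast facts
    have hd0R : (1 : ℝ) ≤ (d : ℝ) := by exact_mod_cast hd1
    have hL0R : (1 : ℝ) ≤ (L : ℝ) := by exact_mod_cast hLpos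
    have hjR : (j : ℝ) + 1 ≤ (L : ℝ) := by exact_mod_cast hjL
    have hpR1 : (1 : ℝ) ≤ ((2 ^ j : ℕ) : ℝ) := by exact_mod_cast h2jpos
    have hpRd : ((2 ^ j : ℕ) : ℝ) ≤ (d : ℝ) := by exact_mod_cast h2j
    have hGR : (G : ℝ) = (L : ℝ) * ((2 ^ j : ℕ) : ℝ) := by
      rw [hGdef]; push_cast; ring
    have hq0R : (q0 : ℝ) = (n : ℝ) + (j : ℝ) + (L : ℝ) * ((d : ℝ) - ((2 ^ j : ℕ) : ℝ)) := by
      rw [hq0def]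
      push_cast [Nat.cast_sub h2j]
      ring
    have hrR : (r : ℝ) = (n : ℝ) - (d : ℝ) := by
      rw [hddef]
      push_cast [Nat.cast_sub (le_of_lt hrn)]
      ring
    have hq0r : ((q0 - r : ℕ) : ℝ) ≤ (d : ℝ) * (1 + 2 * (L : ℝ)) := by
      rw [Nat.cast_sub (by omega : r ≤ q0), hq0R, hrR]
      nlinarith [mul_le_mul_of_nonneg_left hpR1 (by linarith : (0:ℝ) ≤ (L : ℝ)),
        mul_le_mul_of_nonneg_left hpRd (by linarith : (0:ℝ) ≤ (L : ℝ)),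
        mul_le_mul_of_nonneg_left hd0R (by linarith : (0:ℝ) ≤ (L : ℝ))]
    have hGle : (G : ℝ) ≤ (d : ℝ) * (1 + 2 * (L : ℝ)) := by
      rw [hGR]
      nlinarith [mul_le_mul_of_nonneg_left hpRd (by linarith : (0:ℝ) ≤ (L : ℝ)),
        mul_le_mul_of_nonneg_left hd0R (by linarith : (0:ℝ) ≤ (L : ℝ))]
    have har : 0 ≤ aval (V i) (R i) r := ha0 r
    have hvge : aval (V i) (R i) r + Stail ≤ valv := le_trans hlow hval0
    have hdiR : ((n - r : ℕ) : ℝ) = (d : ℝ) := by rw [hddef]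
    have hchain : (d : ℝ) * mms n (V i) ≤ (d : ℝ) * ((1 + 2 * (L : ℝ)) * valv) := by
      calc (d : ℝ) * mms n (V i) = ((n - r : ℕ) : ℝ) * mms n (V i) := by rw [hdiR]
        _ ≤ ∑ k ∈ Finset.Ico r m, aval (V i) (R i) k := hmms
        _ ≤ ((q0 - r : ℕ) : ℝ) * aval (V i) (R i) r + (G : ℝ) * Stail := hsplit
        _ ≤ ((d : ℝ) * (1 + 2 * (L : ℝ))) * aval (V i) (R i) r
            + ((d : ℝ) * (1 + 2 * (L : ℝ))) * Stail :=
          add_le_add (mul_le_mul_of_nonneg_right hq0r har)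
            (mul_le_mul_of_nonneg_right hGle hS0)
        _ = ((d : ℝ) * (1 + 2 * (L : ℝ))) * (aval (V i) (R i) r + Stail) := by ring
        _ ≤ ((d : ℝ) * (1 + 2 * (L : ℝ))) * valv := by
            apply mul_le_mul_of_nonneg_left hvge
            nlinarith
        _ = (d : ℝ) * ((1 + 2 * (L : ℝ)) * valv) := by ring
    have hdpos : (0 : ℝ) < (d : ℝ) := by linarith
    have hmu_le : mms n (V i) ≤ (1 + 2 * (L : ℝ)) * valv :=
      (mul_le_mul_iff_right₀ hdpos).1 hchain
    have hLsq : (1 + 2 * L) ^ 2 ≤ n := by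
      have hlog9 : 9 ≤ Nat.log 2 n := by
        have h512 : (2 : ℕ) ^ 9 ≤ n := by norm_num; omega
        exact (Nat.le_log_iff_pow_le (by norm_num) (by omega)).2 h512
      have h1 := sq_le_pow (Nat.log 2 n) hlog9
      have h2 := Nat.pow_log_le_self 2 (show n ≠ 0 by omega)
      have heq : 1 + 2 * L = 2 * Nat.log 2 n + 3 := by rw [hLdef]; ring
      rw [heq]
      exact le_trans h1 h2
    have hLpos' : (0 : ℝ) < 1 + 2 * (L : ℝ) := by positivity
    have hexp : (1 + 2 * (L : ℝ)) ≤ (n : ℝ) ^ ((1 : ℝ) / 2 + ε) := by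
      have hn1 : (1 : ℝ) ≤ (n : ℝ) := by exact_mod_cast (by omega : 1 ≤ n)
      have hsq : (1 + 2 * (L : ℝ)) ≤ Real.sqrt n := by
        rw [show (1 + 2 * (L : ℝ)) = ((1 + 2 * L : ℕ) : ℝ) by push_cast; ring]
        refine (Real.le_sqrt' (by positivity)).2 ?_
        exact_mod_cast hLsq
      calc (1 + 2 * (L : ℝ)) ≤ Real.sqrt n := hsq
        _ = (n : ℝ) ^ ((1 : ℝ) / 2) := Real.sqrt_eq_rpow _
        _ ≤ (n : ℝ) ^ ((1 : ℝ) / 2 + ε) :=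
          Real.rpow_le_rpow_of_exponent_le hn1 (by linarith)
    have hρ : (n : ℝ) ^ (-(1 / 2 + ε)) ≤ 1 / (1 + 2 * (L : ℝ)) := by
      rw [Real.rpow_neg (by positivity), inv_eq_one_div]
      apply one_div_le_one_div_of_le hLpos'
      exact hexp
    have hμ0 : 0 ≤ mms n (V i) := mms_nonneg hn0 (V i) (hV i)
    calc (n : ℝ) ^ (-(1 / 2 + ε)) * mms n (V i)
        ≤ (1 / (1 + 2 * (L : ℝ))) * mms n (V i) := mul_le_mul_of_nonneg_right hρ hμ0
      _ ≤ valv := by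
          rw [div_mul_eq_mul_div, one_mul, div_le_iff₀ hLpos']
          calc mms n (V i) ≤ (1 + 2 * (L : ℝ)) * valv := hmu_le
            _ = valv * (1 + 2 * (L : ℝ)) := by ring
  exact ⟨pseq n m L hn0, pseq_length n m L hn0, hmain,
    fun R => ⟨fun _ => pickAllocList R (pseq n m L hn0) Finset.univ,
      fun V hV hC i v' hv' hc' => le_rfl,
      fun V hV hC i => hmain V hV R hC i⟩⟩
end

section
/- For every ρ ∈ [0, 1) and ε_0 > 0 there exist a constant C > 0 and a threshold m_0 (depending only on ρ and ε_0) such that the following holds for all n ≥ 1 and all m ≥ m_0. Suppose that for each player i ∈ {1,…,n} the item values v_{i1},…,v_{im} are independent and identically distributed random variables taking values in [0, 1] with mean at least ε_0 (valuations of different players may be arbitrarily correlated), and that, independently of all the values, each item is assigned uniformly at random to one of the n players, independently across items. Let Y_i denote the total value player i receives under this random assignment and v_i(M) = Σ_{j=1}^m v_{ij}. Then the probability that Y_i ≥ (ρ/n)·v_i(M) holds simultaneously for every player i is at least 1 − C·n²/m. Moreover, deterministically (1/n)·v_i(M) ≥ μ_i(n, M) for every i, so with this probability every player receives at least ρ·μ_i(n,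 M). -/
open Finset

open MeasureTheory ProbabilityTheory
open scoped ProbabilityTheory

/-- The heterogeneous codomain used to express the joint independence of the assignment
variables and of the full matrix of item values: the index `none` carries the whole value
matrix, and the index `some j` carries the random assignment of item `j`. -/
def jointType (n m : ℕ) : Option (Fin m) → Type
  | none => Fin n → Fin m → ℝ
  | some _ => Fin n

/-- The measurable-space structures on `jointType`. -/
def jointTypeMS (n m : ℕ) : ∀ k : Option (Fin m), MeasurableSpace (jointType n m k)
  | none => inferInstanceAs (MeasurableSpace (Fin n → Fin m → ℝ))
  | some _ => inferInstanceAs (MeasurableSpace (Fin n))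

/-- The family consisting of the full matrix of item values (at index `none`) together with all
the assignment variables (at indices `some j`). -/
def jointFam {n m : ℕ} {Ω : Type*} (v : Fin n → Fin m → Ω → ℝ)
    (assign : Fin m → Ω → Fin n) : ∀ k : Option (Fin m), Ω → jointType n m k
  | none => fun ω i j => v i j ω
  | some j => fun ω => assign j ω

lemma mms_le_avg {m n : ℕ} (hn : 1 ≤ n) (v : Fin m → ℝ) :
    mms n v ≤ (1 / (n : ℝ)) * ∑ j, v j := by
  have hn0 : (0:ℝ) < n := by exact_mod_cast hn
  haveI : Nonempty (Fin n) := ⟨⟨0, hn⟩⟩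
  apply ciSup_le
  intro f
  have hsum : ∑ i : Fin n, bundleVal v (bundleOf f i) = ∑ j, v j := by
    simpa [bundleVal, bundleOf] using
      Finset.sum_fiberwise_of_maps_to (fun j _ => Finset.mem_univ (f j)) v
  have h1 : (n:ℝ) * (⨅ i : Fin n, bundleVal v (bundleOf f i)) ≤ ∑ j, v j := by
    rw [← hsum]
    calc (n:ℝ) * (⨅ i : Fin n, bundleVal v (bundleOf f i))
        = ∑ _i : Fin n, (⨅ i : Fin n, bundleVal v (bundleOf f i)) := by
          simp [Finset.sum_const, nsmul_eq_mul]
      _ ≤ ∑ i, bundleVal v (bundleOf f i) :=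
          Finset.sum_le_sum fun i _ => ciInf_le (Finite.bddBelow_range _) i
  rw [one_div, inv_mul_eq_div, le_div_iff₀ hn0]
  linarith

lemma integrable_of_abs_le {Ω : Type} [MeasureSpace Ω] [IsProbabilityMeasure (ℙ : Measure Ω)]
    {f : Ω → ℝ} (hf : Measurable f) {C : ℝ} (h : ∀ ω, |f ω| ≤ C) : Integrable f ℙ :=
  (integrable_const C).mono' hf.aestronglyMeasurable
    (ae_of_all _ fun ω => by simpa [Real.norm_eq_abs] using h ω)

lemma memL2_of_abs_le {Ω : Type} [MeasureSpace Ω] [IsProbabilityMeasure (ℙ : Measure Ω)]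
    {f : Ω → ℝ} (hf : Measurable f) {C : ℝ} (h : ∀ ω, |f ω| ≤ C) : MemLp f 2 ℙ :=
  MemLp.of_bound hf.aestronglyMeasurable C
    (ae_of_all _ fun ω => by simpa [Real.norm_eq_abs] using h ω)

set_option maxHeartbeats 1600000 in
/-- For every `ρ ∈ [0,1)` and `ε₀ > 0` there are `C > 0` and `m₀` such that for
all `n ≥ 1`, `m ≥ m₀`: if for each player `i` the values `v i 1, …, v i m` are i.i.d. random
variables with values in `[0,1]` and mean at least `ε₀` (different players' values may be
correlated), and each item is, independently of all the values and independently across items,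
assigned uniformly at random to one of the `n` players, then with probability at least
`1 - C·n²/m` every player `i` simultaneously receives total value at least `(ρ/n)·v_i(M)`.
Moreover, deterministically `(1/n)·v_i(M) ≥ μ_i(n, M)`, so with this probability every player
receives at least `ρ·μ_i(n, M)`. -/
theorem stmt18 (ρ : ℝ) (hρ0 : 0 ≤ ρ) (hρ1 : ρ < 1) (ε₀ : ℝ) (hε₀ : 0 < ε₀) :
    ∃ C : ℝ, 0 < C ∧ ∃ m₀ : ℕ, ∀ n : ℕ, 1 ≤ n → ∀ m : ℕ, m₀ ≤ m →
      ∀ (Ω : Type) (_ : MeasureSpace Ω), IsProbabilityMeasure (ℙ : Measure Ω) →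
      ∀ (v : Fin n → Fin m → Ω → ℝ) (assign : Fin m → Ω → Fin n),
        (∀ i j, Measurable (v i j)) →
        (∀ i j ω, v i j ω ∈ Set.Icc (0 : ℝ) 1) →
        (∀ i, iIndepFun (m := fun _ => inferInstance) (fun j => v i j) ℙ) →
        (∀ i j j', IdentDistrib (v i j) (v i j') ℙ ℙ) →
        (∀ i j, ε₀ ≤ ∫ ω, v i j ω) →
        (∀ j, Measurable (assign j)) →
        (∀ j i, (ℙ : Measure Ω) {ω | assign j ω = i} = 1 / n) →
        iIndepFun (m := jointTypeMS n m) (jointFam v assign) ℙ →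
        (∀ (ω : Ω) (i : Fin n),
            mms n (fun j => v i j ω) ≤ (1 / (n : ℝ)) * ∑ j, v i j ω) ∧
        ENNReal.ofReal (1 - C * (n : ℝ) ^ 2 / (m : ℝ)) ≤
          ℙ {ω : Ω | ∀ i : Fin n, ρ / (n : ℝ) * ∑ j, v i j ω ≤
              ∑ j ∈ Finset.univ.filter (fun j => assign j ω = i), v i j ω} ∧
        ENNReal.ofReal (1 - C * (n : ℝ) ^ 2 / (m : ℝ)) ≤
          ℙ {ω : Ω | ∀ i : Fin n, ρ * mms n (fun j => v i j ω) ≤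
              ∑ j ∈ Finset.univ.filter (fun j => assign j ω = i), v i j ω} := by
  have hδ : 0 < 1 - ρ := by linarith
  set δ : ℝ := 1 - ρ with hδdef
  set C : ℝ := 4 / ε₀ ^ 2 + 4 / (δ ^ 2 * ε₀ ^ 2) with hCdef
  have hC0 : 0 < C := by
    have h1 : 0 < 4 / ε₀ ^ 2 := by positivity
    have h2 : 0 < 4 / (δ ^ 2 * ε₀ ^ 2) :=
      div_pos (by norm_num) (mul_pos (pow_pos hδ 2) (pow_pos hε₀ 2))
    rw [hCdef]; linarith
  refine ⟨C, hC0, 1, ?_⟩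
  intro n hn m hm Ω _ hprob v assign hvmeas hv01 hviid hvid hvmean hameas haunif hindep
  haveI := hprob
  have hn0 : (0:ℝ) < n := by exact_mod_cast hn
  have hm0 : (0:ℝ) < m := by exact_mod_cast hm
  -- Part 1: deterministic bound on the maximin share
  have part1 : ∀ (ω : Ω) (i : Fin n),
      mms n (fun j => v i j ω) ≤ (1 / (n:ℝ)) * ∑ j, v i j ω :=
    fun ω i => mms_le_avg hn _
  refine ⟨part1, ?_⟩
  set c : ℝ := 1 / (n:ℝ) with hc
  have hc0 : 0 < c := by positivity
  have hc1 : c ≤ 1 := by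
    rw [hc, div_le_one hn0]; exact_mod_cast hn
  -- local random variables
  obtain ⟨S, hS⟩ : ∃ S : Fin n → Ω → ℝ, S = fun i ω => ∑ j, v i j ω := ⟨_, rfl⟩
  obtain ⟨ind, hind⟩ : ∃ ind : Fin n → Fin m → Ω → ℝ,
      ind = fun i j ω => if assign j ω = i then 1 else 0 := ⟨_, rfl⟩
  obtain ⟨W, hW⟩ : ∃ W : Fin n → Fin m → Ω → ℝ,
      W = fun i j ω => v i j ω * (ind i j ω - c) := ⟨_, rfl⟩
  obtain ⟨Z, hZ⟩ : ∃ Z : Fin n → Ω → ℝ, Z = fun i ω => ∑ j, W i j ω := ⟨_, rfl⟩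
  -- basic bounds and measurability
  have hvabs : ∀ i j ω, |v i j ω| ≤ 1 := fun i j ω =>
    abs_le.2 ⟨by linarith [(hv01 i j ω).1], (hv01 i j ω).2⟩
  have hvint : ∀ i j, Integrable (v i j) ℙ := fun i j =>
    integrable_of_abs_le (hvmeas i j) (hvabs i j)
  have hindabs : ∀ i j ω, |ind i j ω - c| ≤ 1 := by
    intro i j ω
    rw [hind]; dsimp only
    split <;> (rw [abs_le]; constructor <;> linarith)
  have hindmeas : ∀ i j, Measurable (ind i j) := by
    intro i j
    rw [hind]
    exact ((Measurable.of_discrete (f := fun a : Fin n => if a = i then (1:ℝ) else 0)).comp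
      (hameas j))
  have hindint : ∀ i j, Integrable (ind i j) ℙ := by
    intro i j
    refine integrable_of_abs_le (hindmeas i j) (C := 1) fun ω => ?_
    rw [hind]; dsimp only; split <;> simp
  have hWabs : ∀ i j ω, |W i j ω| ≤ 1 := by
    intro i j ω
    rw [hW]; dsimp only
    rw [abs_mul]
    exact mul_le_one₀ (hvabs i j ω) (abs_nonneg _) (hindabs i j ω)
  have hWmeas : ∀ i j, Measurable (W i j) := by
    intro i j
    rw [hW]; dsimp only
    exact (hvmeas i j).mul ((hindmeas i j).sub measurable_const)
  have hWint : ∀ i j, Integrable (W i j) ℙ := fun i j =>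
    integrable_of_abs_le (hWmeas i j) (hWabs i j)
  have hSmeas : ∀ i, Measurable (S i) := by
    intro i; rw [hS]
    exact Finset.measurable_sum _ fun j _ => hvmeas i j
  have hZmeas : ∀ i, Measurable (Z i) := by
    intro i; rw [hZ]
    exact Finset.measurable_sum _ fun j _ => hWmeas i j
  have hSabs : ∀ i ω, |S i ω| ≤ m := by
    intro i ω
    calc |S i ω| ≤ ∑ j, |v i j ω| := by rw [hS]; exact Finset.abs_sum_le_sum_abs _ _
      _ ≤ ∑ _j : Fin m, (1:ℝ) := Finset.sum_le_sum fun j _ => hvabs i j ω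
      _ = m := by simp
  have hZabs : ∀ i ω, |Z i ω| ≤ m := by
    intro i ω
    calc |Z i ω| ≤ ∑ j, |W i j ω| := by rw [hZ]; exact Finset.abs_sum_le_sum_abs _ _
      _ ≤ ∑ _j : Fin m, (1:ℝ) := Finset.sum_le_sum fun j _ => hWabs i j ω
      _ = m := by simp
  have hSL2 : ∀ i, MemLp (S i) 2 ℙ := fun i => memL2_of_abs_le (hSmeas i) (hSabs i)
  have hZL2 : ∀ i, MemLp (Z i) 2 ℙ := fun i => memL2_of_abs_le (hZmeas i) (hZabs i)
  have hSint : ∀ i, Integrable (S i) ℙ := fun i =>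
    integrable_of_abs_le (hSmeas i) (hSabs i)
  have hZint : ∀ i, Integrable (Z i) ℙ := fun i =>
    integrable_of_abs_le (hZmeas i) (hZabs i)
  -- expectation of indicators
  have hEind : ∀ i j, (∫ ω, ind i j ω) = c := by
    intro i j
    have hms : MeasurableSet {ω | assign j ω = i} :=
      (hameas j) (measurableSet_singleton i)
    have heq : (fun ω => ind i j ω) = Set.indicator {ω | assign j ω = i} (fun _ => (1:ℝ)) := by
      funext ω
      rw [hind]
      by_cases h : assign j ω = i <;> simp [Set.indicator_apply, h]
    rw [heq, integral_indicator_const (1:ℝ) hms, measureReal_def, haunif j i, smul_eq_mul, mul_one, hc]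
    simp [ENNReal.toReal_div]
  have hEindc : ∀ i j, (∫ ω, (ind i j ω - c)) = 0 := by
    intro i j
    rw [integral_sub (hindint i j) (integrable_const c), hEind, integral_const]
    simp
  -- joint independence machinery
  have hjmeas : ∀ k, @Measurable Ω (jointType n m k) _ (jointTypeMS n m k)
      (jointFam v assign k) := by
    intro k
    cases k with
    | none =>
        exact measurable_pi_lambda _ fun i => measurable_pi_lambda _ fun j => hvmeas i j
    | some j => exact hameas j
  have hcomp1 : ∀ (j : Fin m) (φ : (Fin n → Fin m → ℝ) → ℝ) (ψ : Fin n → ℝ),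
      Measurable φ →
      IndepFun (fun ω => φ (fun i' j' => v i' j' ω)) (fun ω => ψ (assign j ω)) ℙ :=
    fun j φ ψ hφ =>
      (hindep.indepFun (show (none : Option (Fin m)) ≠ some j by simp)).comp hφ
        (Measurable.of_discrete (f := ψ))
  have hcomp2 : ∀ (j j' : Fin m), j ≠ j' →
      ∀ (φ : ((Fin n → Fin m → ℝ) × Fin n) → ℝ) (ψ : Fin n → ℝ), Measurable φ →
      IndepFun (fun ω => φ ⟨fun i' j'' => v i' j'' ω, assign j ω⟩)
        (fun ω => ψ (assign j' ω)) ℙ :=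
    fun j j' h φ ψ hφ =>
      (hindep.indepFun_prodMk hjmeas none (some j) (some j') (by simp)
        (by simpa using h)).comp hφ (Measurable.of_discrete (f := ψ))
  -- expectations of the W's
  have hEW : ∀ i j, (∫ ω, W i j ω) = 0 := by
    intro i j
    have hI : IndepFun (fun ω => v i j ω) (fun ω => ind i j ω - c) ℙ := by
      have := hcomp1 j (fun M => M i j) (fun a => (if a = i then (1:ℝ) else 0) - c)
        ((measurable_pi_apply j).comp (measurable_pi_apply i))
      simpa [hind] using this
    have h2 := hI.integral_mul_eq_mul_integral (hvint i j).aestronglyMeasurable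
      ((hindint i j).sub (integrable_const c)).aestronglyMeasurable
    have h3 : (∫ ω, v i j ω * (ind i j ω - c)) =
        (∫ ω, v i j ω) * ∫ ω, (ind i j ω - c) := by
      simpa [Pi.mul_apply] using h2
    rw [hW]; dsimp only
    rw [h3, hEindc i j, mul_zero]
  have hEWsq : ∀ i j, (∫ ω, (W i j ω)^2) ≤ c := by
    intro i j
    have hI : IndepFun (fun ω => (v i j ω)^2) (fun ω => (ind i j ω - c)^2) ℙ := by
      have := hcomp1 j (fun M => (M i j)^2)
        (fun a => ((if a = i then (1:ℝ) else 0) - c)^2)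
        (((measurable_pi_apply j).comp (measurable_pi_apply i)).pow_const 2)
      simpa [hind] using this
    have hv2int : Integrable (fun ω => (v i j ω)^2) ℙ := by
      refine integrable_of_abs_le ((hvmeas i j).pow_const 2) (C := 1) fun ω => ?_
      rw [abs_pow]
      exact pow_le_one₀ (abs_nonneg _) (hvabs i j ω)
    have hg2int : Integrable (fun ω => (ind i j ω - c)^2) ℙ := by
      refine integrable_of_abs_le (((hindmeas i j).sub measurable_const).pow_const 2)
        (C := 1) fun ω => ?_
      rw [abs_pow]
      exact pow_le_one₀ (abs_nonneg _) (hindabs i j ω)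
    have e1 : (∫ ω, (ind i j ω - c)^2) = c - c^2 := by
      have hpt : ∀ ω, (ind i j ω - c)^2 = (1 - 2*c) * ind i j ω + c^2 := by
        intro ω
        rw [hind]; dsimp only
        split <;> ring
      simp only [hpt]
      rw [integral_add ((hindint i j).const_mul _) (integrable_const _),
        integral_const_mul, hEind, integral_const]
      simp only [measure_univ, ENNReal.toReal_one, probReal_univ, smul_eq_mul, one_mul]
      ring
    have e2a : (∫ ω, (v i j ω)^2) ≤ 1 := by
      have := integral_mono hv2int (integrable_const (1:ℝ))
        (fun ω => pow_le_one₀ (hv01 i j ω).1 (hv01 i j ω).2)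
      simpa using this
    have e2b : 0 ≤ ∫ ω, (v i j ω)^2 := integral_nonneg fun ω => sq_nonneg _
    have h2 := hI.integral_mul_eq_mul_integral hv2int.aestronglyMeasurable hg2int.aestronglyMeasurable
    have h3 : (∫ ω, (v i j ω)^2 * (ind i j ω - c)^2) =
        (∫ ω, (v i j ω)^2) * ∫ ω, (ind i j ω - c)^2 := by
      simpa [Pi.mul_apply] using h2
    have hWpt : ∀ ω, (W i j ω)^2 = (v i j ω)^2 * (ind i j ω - c)^2 := by
      intro ω; rw [hW]; dsimp only; ring
    simp only [hWpt]
    rw [h3, e1]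
    calc (∫ ω, (v i j ω)^2) * (c - c^2) ≤ 1 * c :=
        mul_le_mul e2a (by nlinarith) (by nlinarith) one_pos.le
      _ = c := one_mul c
  have hEWW : ∀ i j j', j ≠ j' → (∫ ω, W i j ω * W i j' ω) = 0 := by
    intro i j j' hne
    have hφmeas : Measurable (fun p : (Fin n → Fin m → ℝ) × Fin n =>
        p.1 i j * p.1 i j' * ((if p.2 = i then (1:ℝ) else 0) - c)) := by
      refine Measurable.mul (Measurable.mul ?_ ?_) ?_
      · exact (measurable_pi_apply j).comp ((measurable_pi_apply i).comp measurable_fst)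
      · exact (measurable_pi_apply j').comp ((measurable_pi_apply i).comp measurable_fst)
      · exact ((Measurable.of_discrete (f := fun a : Fin n => if a = i then (1:ℝ) else 0)).comp
          measurable_snd).sub measurable_const
    have hI : IndepFun (fun ω => v i j ω * v i j' ω * (ind i j ω - c))
        (fun ω => ind i j' ω - c) ℙ := by
      have := hcomp2 j j' hne
        (fun p => p.1 i j * p.1 i j' * ((if p.2 = i then (1:ℝ) else 0) - c))
        (fun a => (if a = i then (1:ℝ) else 0) - c) hφmeas
      simpa [hind] using this
    have hint1 : Integrable (fun ω => v i j ω * v i j' ω * (ind i j ω - c)) ℙ := by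
      refine integrable_of_abs_le
        (((hvmeas i j).mul (hvmeas i j')).mul ((hindmeas i j).sub measurable_const))
        (C := 1) fun ω => ?_
      rw [abs_mul]
      refine mul_le_one₀ ?_ (abs_nonneg _) (hindabs i j ω)
      rw [abs_mul]
      exact mul_le_one₀ (hvabs i j ω) (abs_nonneg _) (hvabs i j' ω)
    have h2 := hI.integral_mul_eq_mul_integral hint1.aestronglyMeasurable
      ((hindint i j').sub (integrable_const c)).aestronglyMeasurable
    have h3 : (∫ ω, (v i j ω * v i j' ω * (ind i j ω - c)) * (ind i j' ω - c)) =
        (∫ ω, v i j ω * v i j' ω * (ind i j ω - c)) * ∫ ω, (ind i j' ω - c) := by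
      simpa [Pi.mul_apply] using h2
    have hpt : ∀ ω, W i j ω * W i j' ω =
        (v i j ω * v i j' ω * (ind i j ω - c)) * (ind i j' ω - c) := by
      intro ω; rw [hW]; dsimp only; ring
    simp only [hpt]
    rw [h3, hEindc i j', mul_zero]
  -- expectation and second moment of Z
  have hEZ : ∀ i, (∫ ω, Z i ω) = 0 := by
    intro i
    rw [hZ]; dsimp only
    rw [integral_finset_sum _ fun j _ => hWint i j]
    simp [hEW]
  have hWWint : ∀ i j j', Integrable (fun ω => W i j ω * W i j' ω) ℙ := by
    intro i j j'
    refine integrable_of_abs_le ((hWmeas i j).mul (hWmeas i j')) (C := 1) fun ω => ?_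
    rw [abs_mul]
    exact mul_le_one₀ (hWabs i j ω) (abs_nonneg _) (hWabs i j' ω)
  have hEZsq : ∀ i, (∫ ω, (Z i ω)^2) ≤ m * c := by
    intro i
    have hrw : ∀ ω, (Z i ω)^2 = ∑ j, ∑ j', W i j ω * W i j' ω := by
      intro ω
      rw [hZ]; dsimp only
      rw [sq, Finset.sum_mul_sum]
    calc (∫ ω, (Z i ω)^2) = ∑ j : Fin m, ∑ j' : Fin m, ∫ ω, W i j ω * W i j' ω := by
          simp only [hrw]
          rw [integral_finset_sum _ fun j _ => integrable_finset_sum _ fun j' _ => hWWint i j j']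
          exact Finset.sum_congr rfl fun j _ =>
            integral_finset_sum _ fun j' _ => hWWint i j j'
      _ = ∑ j : Fin m, ∫ ω, (W i j ω)^2 := by
          refine Finset.sum_congr rfl fun j _ => ?_
          rw [Finset.sum_eq_single j (fun j' _ hne => hEWW i j j' (Ne.symm hne)) (by simp)]
          simp only [← sq]
      _ ≤ ∑ _j : Fin m, c := Finset.sum_le_sum fun j _ => hEWsq i j
      _ = m * c := by simp [mul_comm]
  -- variance bounds
  have hVarZ : ∀ i, variance (Z i) ℙ ≤ m * c := by
    intro i
    refine le_trans (variance_le_expectation_sq (hZmeas i).aestronglyMeasurable) ?_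
    exact hEZsq i
  have hVarS : ∀ i, variance (S i) ℙ ≤ m := by
    intro i
    have hSrw : S i = ∑ j : Fin m, v i j := by
      funext ω; rw [hS]; simp
    rw [hSrw, IndepFun.variance_sum
      (fun j _ => memL2_of_abs_le (hvmeas i j) (hvabs i j))
      (fun j _ j' _ hne => (hviid i).indepFun hne)]
    calc ∑ j : Fin m, variance (v i j) ℙ ≤ ∑ _j : Fin m, (1:ℝ) := by
          refine Finset.sum_le_sum fun j _ => ?_
          refine le_trans (variance_le_expectation_sq (hvmeas i j).aestronglyMeasurable) ?_
          have hv2int : Integrable (fun ω => (v i j ω)^2) ℙ := by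
            refine integrable_of_abs_le ((hvmeas i j).pow_const 2) (C := 1) fun ω => ?_
            rw [abs_pow]
            exact pow_le_one₀ (abs_nonneg _) (hvabs i j ω)
          have := integral_mono hv2int (integrable_const (1:ℝ))
            (fun ω => pow_le_one₀ (hv01 i j ω).1 (hv01 i j ω).2)
          simpa using this
      _ = m := by simp
  -- mean of S
  have hESge : ∀ i, ε₀ * m ≤ ∫ ω, S i ω := by
    intro i
    rw [hS]; dsimp only
    rw [integral_finset_sum _ fun j _ => hvint i j]
    calc ε₀ * m = ∑ _j : Fin m, ε₀ := by simp [mul_comm]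
      _ ≤ ∑ j : Fin m, ∫ ω, v i j ω := Finset.sum_le_sum fun j _ => hvmean i j
  -- Chebyshev setup
  set a : ℝ := ε₀ * m / 2 with ha
  have ha0 : 0 < a := by rw [ha]; positivity
  set t : ℝ := δ * ε₀ * m / (2 * n) with ht
  have ht0 : 0 < t := by rw [ht]; positivity
  have hChebS : ∀ i, ℙ {ω | a ≤ |S i ω - ∫ x, S i x|} ≤ ENNReal.ofReal ((m:ℝ) / a^2) := by
    intro i
    refine le_trans (meas_ge_le_variance_div_sq (hSL2 i) ha0) (ENNReal.ofReal_le_ofReal ?_)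
    gcongr
    exact hVarS i
  have hChebZ : ∀ i, ℙ {ω | t ≤ |Z i ω - ∫ x, Z i x|} ≤
      ENNReal.ofReal ((m:ℝ) * c / t^2) := by
    intro i
    refine le_trans (meas_ge_le_variance_div_sq (hZL2 i) ht0) (ENNReal.ofReal_le_ofReal ?_)
    gcongr
    exact hVarZ i
  -- the bad event
  obtain ⟨Bad, hBad⟩ : ∃ Bad : Fin n → Set Ω,
      Bad = fun i => {ω | a ≤ |S i ω - ∫ x, S i x|} ∪ {ω | t ≤ |Z i ω - ∫ x, Z i x|} :=
    ⟨_, rfl⟩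
  set K : ℝ := (m:ℝ) / a^2 + (m:ℝ) * c / t^2 with hK
  have hK1 : 0 ≤ (m:ℝ) / a^2 := by positivity
  have hK2 : 0 ≤ (m:ℝ) * c / t^2 := by positivity
  have hBadle : ∀ i, ℙ (Bad i) ≤ ENNReal.ofReal K := by
    intro i
    rw [hBad]; dsimp only
    refine le_trans (measure_union_le _ _) ?_
    rw [hK, ENNReal.ofReal_add hK1 hK2]
    exact add_le_add (hChebS i) (hChebZ i)
  have hUnion : ℙ (⋃ i, Bad i) ≤ ENNReal.ofReal ((n:ℝ) * K) := by
    refine le_trans (measure_iUnion_fintype_le _ _) ?_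
    calc ∑ i : Fin n, ℙ (Bad i) ≤ ∑ _i : Fin n, ENNReal.ofReal K :=
          Finset.sum_le_sum fun i _ => hBadle i
      _ = (n : ℕ) • ENNReal.ofReal K := by simp
      _ = ENNReal.ofReal ((n:ℝ) * K) := by
          rw [nsmul_eq_mul, ← ENNReal.ofReal_natCast n,
            ← ENNReal.ofReal_mul (by positivity)]
  have hKle : (n:ℝ) * K ≤ C * n^2 / m := by
    have e1 : (m:ℝ) / a^2 = 4 / (ε₀^2 * m) := by
      rw [ha]; field_simp; ring
    have e2 : (m:ℝ) * c / t^2 = 4 * n / (δ^2 * ε₀^2 * m) := by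
      rw [ht, hc]; field_simp; ring
    have hn1 : (1:ℝ) ≤ (n:ℝ) := by exact_mod_cast hn
    have hn2 : (n:ℝ) ≤ (n:ℝ)^2 := by nlinarith
    rw [hK, e1, e2]
    calc (n:ℝ) * (4 / (ε₀^2 * m) + 4 * n / (δ^2 * ε₀^2 * m))
        = 4 * n / (ε₀^2 * m) + 4 * n^2 / (δ^2 * ε₀^2 * m) := by ring
      _ ≤ 4 * n^2 / (ε₀^2 * m) + 4 * n^2 / (δ^2 * ε₀^2 * m) := by gcongr
      _ = C * n^2 / m := by
          rw [hCdef]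
          field_simp
  have hmeasBad : MeasurableSet (⋃ i, Bad i) := by
    refine MeasurableSet.iUnion fun i => ?_
    rw [hBad]; dsimp only
    exact (measurableSet_le measurable_const (((hSmeas i).sub measurable_const).abs)).union
      (measurableSet_le measurable_const (((hZmeas i).sub measurable_const).abs))
  have hlow : ENNReal.ofReal (1 - C * (n:ℝ)^2 / m) ≤ ℙ ((⋃ i, Bad i)ᶜ) := by
    rw [prob_compl_eq_one_sub hmeasBad]
    calc ENNReal.ofReal (1 - C * (n:ℝ)^2 / m)
        = 1 - ENNReal.ofReal (C * (n:ℝ)^2 / m) := by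
          rw [ENNReal.ofReal_sub _ (by positivity), ENNReal.ofReal_one]
      _ ≤ 1 - ℙ (⋃ i, Bad i) :=
          tsub_le_tsub_left (le_trans hUnion (ENNReal.ofReal_le_ofReal hKle)) 1
  -- the good event implies the conclusion
  have hY : ∀ i ω, (∑ j ∈ Finset.univ.filter (fun j => assign j ω = i), v i j ω) =
      Z i ω + c * S i ω := by
    intro i ω
    rw [Finset.sum_filter, hZ, hS]; dsimp only
    rw [Finset.mul_sum, ← Finset.sum_add_distrib]
    refine Finset.sum_congr rfl fun j _ => ?_
    rw [hW, hind]; dsimp only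
    by_cases h : assign j ω = i <;> simp [h] <;> ring
  have hsub : (⋃ i, Bad i)ᶜ ⊆ {ω : Ω | ∀ i : Fin n, ρ / (n:ℝ) * ∑ j, v i j ω ≤
      ∑ j ∈ Finset.univ.filter (fun j => assign j ω = i), v i j ω} := by
    intro ω hω i
    have hωi : ω ∉ Bad i := by
      intro hmem
      exact hω (Set.mem_iUnion.2 ⟨i, hmem⟩)
    rw [hBad] at hωi
    simp only [Set.mem_union, Set.mem_setOf_eq, not_or, not_le] at hωi
    obtain ⟨h1, h2⟩ := hωi
    have hES := hESge i
    have hEZi := hEZ i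
    rw [hEZi, sub_zero] at h2
    have h1' := abs_lt.1 h1
    have h2' := abs_lt.1 h2
    have hSge : ε₀ * m / 2 ≤ S i ω := by
      rw [ha] at h1'
      linarith [h1'.1]
    have hZge : -t < Z i ω := h2'.1
    have e3 : δ * c * (ε₀ * m / 2) ≤ δ * c * S i ω :=
      mul_le_mul_of_nonneg_left hSge (by positivity)
    have e4 : ρ / (n:ℝ) * S i ω = c * S i ω - δ * c * S i ω := by
      rw [hδdef, hc]; ring
    have e5 : t = δ * c * (ε₀ * m / 2) := by
      rw [ht, hc]; ring
    have hSval : (∑ j, v i j ω) = S i ω := by rw [hS]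
    show ρ / (n:ℝ) * ∑ j, v i j ω ≤ _
    calc ρ / (n:ℝ) * ∑ j, v i j ω = ρ / (n:ℝ) * S i ω := by rw [hSval]
      _ ≤ Z i ω + c * S i ω := by
          rw [e4]
          clear_value δ C c a t K
          linarith
      _ = _ := (hY i ω).symm
  have hmain : ENNReal.ofReal (1 - C * (n:ℝ)^2 / m) ≤
      ℙ {ω : Ω | ∀ i : Fin n, ρ / (n:ℝ) * ∑ j, v i j ω ≤
        ∑ j ∈ Finset.univ.filter (fun j => assign j ω = i), v i j ω} :=
    le_trans hlow (measure_mono hsub)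
  refine ⟨hmain, le_trans hmain (measure_mono ?_)⟩
  intro ω hω i
  calc ρ * mms n (fun j => v i j ω) ≤ ρ * (c * ∑ j, v i j ω) :=
        mul_le_mul_of_nonneg_left (part1 ω i) hρ0
    _ = ρ / (n:ℝ) * ∑ j, v i j ω := by rw [hc]; ring
    _ ≤ _ := hω i
end
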